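/- arXiv:1801.09863 — 2 statements merged into one kernel-verified Lean document; each statement's English description precedes it below -/
import Mathlib

section
/- Let p be an odd prime and let G be the group presented as F_4 modulo the normal closure of {r_b} ∪ W_p (i.e., G = ⟨x_1, x_2, x_3, x_4 | r_b, W_p⟩). Then for every integer q ≥ p+1, the quotient G/γ_q G is not isomorphic to F^q(4,p). -/
/-- `W_n`, the set of `n`-th powers in a group `G`. -/
def powSet (G : Type*) [Group G] (n : ℕ) : Set G := {x | ∃ w : G, x = w ^ n}

/-- `W̄_n`, the normal subgroup of the free group `F_m` generated by the set `W_n`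
of `n`-th powers. -/
def Wbar (m n : ℕ) : Subgroup (FreeGroup (Fin m)) :=
  Subgroup.normalClosure (powSet (FreeGroup (Fin m)) n)

instance (m n : ℕ) : (Wbar m n).Normal := Subgroup.normalClosure_normal

/-- `W̄_n · γ_q F_m`: since both factors are normal subgroups of `F_m`, this product
subgroup equals the join.  (Recall `lowerCentralSeries G 0 = G = γ₁ G`, so
`γ_q G = lowerCentralSeries G (q-1)`.) -/
def WbarGamma (m n q : ℕ) : Subgroup (FreeGroup (Fin m)) :=
  Wbar m n ⊔ (⊤ : Subgroup (FreeGroup (Fin m))).lowerCentralSeries (q - 1)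

instance (m n q : ℕ) : (WbarGamma m n q).Normal := Subgroup.sup_normal _ _

/-- `F^q(m,n) = F_m / (W̄_n · γ_q F_m)`. -/
def BurnsideQuot (m n q : ℕ) : Type := FreeGroup (Fin m) ⧸ WbarGamma m n q

noncomputable instance (m n q : ℕ) : Group (BurnsideQuot m n q) :=
  QuotientGroup.Quotient.group _

/-- The generators `x_1, …, x_4` of the free group `F_4` (`xF4 i` is `x_{i+1}`). -/
def xF4 (i : Fin 4) : FreeGroup (Fin 4) := FreeGroup.of i

/-- `Q_3 = x_4x_1⁻¹x_2x_4⁻¹x_1x_2⁻¹ · x_3 · x_2⁻¹x_1x_4⁻¹x_2x_1⁻¹x_4 ∈ F_4`. -/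
def QWelded : FreeGroup (Fin 4) :=
  xF4 3 * (xF4 0)⁻¹ * xF4 1 * (xF4 3)⁻¹ * xF4 0 * (xF4 1)⁻¹ *
  xF4 2 *
  (xF4 1)⁻¹ * xF4 0 * (xF4 3)⁻¹ * xF4 1 * (xF4 0)⁻¹ * xF4 3

/-- `r_b = Q_3 x_3⁻¹ ∈ F_4`, the relator of the associated core group of the closure
of the welded 4-braid `b`. -/
def rWelded : FreeGroup (Fin 4) := QWelded * (xF4 2)⁻¹

/-- `G = ⟨x_1, x_2, x_3, x_4 | r_b, W_p⟩`, the quotient of `F_4` by the normal closure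
of `{r_b} ∪ W_p`. -/
def GWelded (p : ℕ) : Type :=
  FreeGroup (Fin 4) ⧸
    Subgroup.normalClosure ({rWelded} ∪ powSet (FreeGroup (Fin 4)) p)

noncomputable instance (p : ℕ) : Group (GWelded p) := QuotientGroup.Quotient.group _

/-! Map `x₁ ↦ X`, `x₂ ↦ 1`, `x₃ ↦ Z`, `x₄ ↦ Y`, where `X, Y, Z` generate a group `H` of order
`p⁷`, exponent `p` and nilpotency class `3`. This kills `W̄_p · γ_q F₄` but not `r_b`, so it
factors through `F^q(4,p)` but not through its quotient `G/γ_q G`. That is impossible when the two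
are isomorphic: precomposition with the quotient map injects `Hom(G/γ_q G, H)` into the finite set
`Hom(F^q(4,p), H)`, which then has the same size, so every homomorphism `F^q(4,p) → H` factors
through `G/γ_q G`. -/

/-- The group of units `1 + a + M + T` of the tensor algebra on `V = (ZMod p)³` truncated in
degree `4`, modulo the normal subgroup on which the coordinates `x, y, z` of `a`,
`xy = M₀₁ - M₁₀`, `xz = M₀₂`, `yz = M₁₂` and `xyz = T₀₁₂ - T₁₀₂` vanish. -/
@[ext]
structure ClassThree (p : ℕ) where
  x : ZMod p
  y : ZMod p
  z : ZMod p
  xy : ZMod p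
  xz : ZMod p
  yz : ZMod p
  xyz : ZMod p

namespace ClassThree

open scoped commutatorElement

variable {p : ℕ}

instance : Mul (ClassThree p) :=
  ⟨fun g h => ⟨g.x + h.x, g.y + h.y, g.z + h.z, g.xy + h.xy + g.x * h.y - g.y * h.x,
    g.xz + h.xz + g.x * h.z, g.yz + h.yz + g.y * h.z,
    g.xyz + h.xyz + g.x * h.yz - g.y * h.xz + g.xy * h.z⟩⟩

instance : One (ClassThree p) := ⟨⟨0, 0, 0, 0, 0, 0, 0⟩⟩

instance : Inv (ClassThree p) :=
  ⟨fun g => ⟨-g.x, -g.y, -g.z, -g.xy, -g.xz + g.x * g.z, -g.yz + g.y * g.z,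
    -g.xyz + g.x * g.yz - g.y * g.xz + g.xy * g.z⟩⟩

lemma mul_def (g h : ClassThree p) : g * h =
    ⟨g.x + h.x, g.y + h.y, g.z + h.z, g.xy + h.xy + g.x * h.y - g.y * h.x,
      g.xz + h.xz + g.x * h.z, g.yz + h.yz + g.y * h.z,
      g.xyz + h.xyz + g.x * h.yz - g.y * h.xz + g.xy * h.z⟩ := rfl

lemma one_def : (1 : ClassThree p) = ⟨0, 0, 0, 0, 0, 0, 0⟩ := rfl

lemma inv_def (g : ClassThree p) : g⁻¹ =
    ⟨-g.x, -g.y, -g.z, -g.xy, -g.xz + g.x * g.z, -g.yz + g.y * g.z,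
      -g.xyz + g.x * g.yz - g.y * g.xz + g.xy * g.z⟩ := rfl

instance : Group (ClassThree p) :=
  Group.ofLeftAxioms
    (fun _ _ _ => by ext <;> simp only [mul_def] <;> ring)
    (fun _ => by ext <;> simp only [mul_def, one_def] <;> ring)
    (fun _ => by ext <;> simp only [mul_def, inv_def, one_def] <;> ring)

lemma pow_def (g : ClassThree p) (n : ℕ) : g ^ n =
    ⟨n * g.x, n * g.y, n * g.z, n * g.xy, n * g.xz + (n.choose 2 : ℕ) * (g.x * g.z),
      n * g.yz + (n.choose 2 : ℕ) * (g.y * g.z),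
      n * g.xyz + (n.choose 2 : ℕ) * (g.x * g.yz - g.y * g.xz + g.xy * g.z)⟩ := by
  induction n with
  | zero => ext <;> simp [one_def]
  | succ n ih =>
    rw [pow_succ, ih, mul_def, Nat.choose_succ_succ', Nat.choose_one_right]
    ext <;> push_cast <;> ring

lemma pow_eq_one (hodd : Odd p) (g : ClassThree p) : g ^ p = 1 := by
  have hchoose : ((p.choose 2 : ℕ) : ZMod p) = 0 := by
    rw [ZMod.natCast_eq_zero_iff, Nat.choose_two_right,
      Nat.mul_div_assoc p (Nat.Odd.sub_odd hodd odd_one).two_dvd]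
    exact dvd_mul_right p _
  rw [pow_def, ZMod.natCast_self, hchoose]
  ext <;> simp [one_def]

def ofXYZ (c : ZMod p) : ClassThree p := ⟨0, 0, 0, 0, 0, 0, c⟩

lemma ofXYZ_mem_center (c : ZMod p) : ofXYZ c ∈ Subgroup.center (ClassThree p) :=
  Subgroup.mem_center_iff.mpr fun g => by ext <;> simp only [ofXYZ, mul_def] <;> ring

lemma ofXYZ_eq_one_iff {c : ZMod p} : ofXYZ c = 1 ↔ c = 0 := by
  simp [ofXYZ, one_def, ClassThree.ext_iff]

def linearPart (p : ℕ) : ClassThree p →* Multiplicative (ZMod p × ZMod p × ZMod p) where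
  toFun g := .ofAdd (g.x, g.y, g.z)
  map_one' := rfl
  map_mul' _ _ := rfl

lemma commutator_eq_ofXYZ_of_mem_ker {g : ClassThree p} (hg : g ∈ (linearPart p).ker)
    (h : ClassThree p) : ⁅g, h⁆ = ofXYZ (g.xy * h.z + g.xz * h.y - g.yz * h.x) := by
  simp only [MonoidHom.mem_ker, linearPart, MonoidHom.coe_mk, OneHom.coe_mk] at hg
  obtain ⟨hx, hy, hz⟩ : g.x = 0 ∧ g.y = 0 ∧ g.z = 0 := by simpa using hg
  rw [commutatorElement_def]
  ext <;> simp only [ofXYZ, mul_def, inv_def, hx, hy, hz] <;> ring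

lemma lowerCentralSeries_three_eq_bot :
    (⊤ : Subgroup (ClassThree p)).lowerCentralSeries 3 = ⊥ := by
  refine Subgroup.lowerCentralSeries_succ_eq_bot (n := 2) _ ?_
  rw [Subgroup.lowerCentralSeries_succ, Subgroup.top_lowerCentralSeries_one,
    Subgroup.commutator_le]
  intro g hg h _
  rw [commutator_eq_ofXYZ_of_mem_ker (Abelianization.commutator_subset_ker (linearPart p) hg)]
  exact ofXYZ_mem_center _

instance [NeZero p] : Finite (ClassThree p) :=
  Finite.of_injective (fun g : ClassThree p => (g.x, g.y, g.z, g.xy, g.xz, g.yz, g.xyz))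
    fun g h hgh => by simp only [Prod.mk.injEq] at hgh; ext <;> tauto

def rWeldedWitness (p : ℕ) : FreeGroup (Fin 4) →* ClassThree p :=
  FreeGroup.lift ![⟨1, 0, 0, 0, 0, 0, 0⟩, 1, ⟨0, 0, 1, 0, 0, 0, 0⟩, ⟨0, 1, 0, 0, 0, 0, 0⟩]

lemma rWeldedWitness_rWelded : rWeldedWitness p rWelded = ofXYZ 2 := by
  simp only [rWelded, QWelded, xF4, map_mul, map_inv, rWeldedWitness, FreeGroup.lift_apply_of]
  ext <;> simp [ofXYZ, mul_def, inv_def, one_def]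
  exact one_add_one_eq_two

lemma rWeldedWitness_rWelded_ne_one (hp : 2 < p) : rWeldedWitness p rWelded ≠ 1 := by
  rw [rWeldedWitness_rWelded, Ne, ofXYZ_eq_one_iff, ← Nat.cast_ofNat,
    ZMod.natCast_eq_zero_iff]
  exact fun h2 => absurd (Nat.le_of_dvd two_pos h2) (by omega)

end ClassThree

section

variable {G K : Type*} [Group G] [Group K]

theorem lowerCentralSeries_le_ker_of_eq_bot (f : G →* K) {n : ℕ}
    (h : (⊤ : Subgroup K).lowerCentralSeries n = ⊥) :
    (⊤ : Subgroup G).lowerCentralSeries n ≤ f.ker := by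
  rw [← MonoidHom.comap_bot, ← h, ← Subgroup.map_le_iff_le_comap,
    Subgroup.map_lowerCentralSeries]
  exact Subgroup.lowerCentralSeries_mono n le_top

theorem lowerCentralSeries_quotient_lowerCentralSeries_eq_bot (n : ℕ) :
    (⊤ : Subgroup (G ⧸ (⊤ : Subgroup G).lowerCentralSeries n)).lowerCentralSeries n = ⊥ := by
  rw [← Subgroup.map_top_of_surjective _ (QuotientGroup.mk'_surjective _),
    ← Subgroup.map_lowerCentralSeries, Subgroup.map_eq_bot_iff, QuotientGroup.ker_mk']

instance MonoidHom.finite_of_fg [Group.FG G] [Finite K] : Finite (G →* K) := by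
  obtain ⟨S, hS⟩ := Group.FG.out (G := G)
  exact Finite.of_injective (fun φ : G →* K => fun s : S => φ s)
    fun φ ψ h => MonoidHom.eq_of_eqOn_dense hS fun s hs => congrFun h ⟨s, hs⟩

theorem MonoidHom.ker_le_ker_of_surjective_of_mulEquiv {A B H : Type*} [Group A] [Group B]
    [Group H] [Group.FG A] [Finite H] {ρ : A →* B} (hρ : Function.Surjective ρ) (e : B ≃* A)
    (φ : A →* H) : ρ.ker ≤ φ.ker := by
  have : Finite (B →* H) := .of_equiv _ e.monoidHomCongrLeftEquiv.symm
  have hinj : Function.Injective fun ψ : B →* H => ψ.comp ρ :=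
    fun _ _ h => (MonoidHom.cancel_right hρ).mp h
  obtain ⟨ψ, rfl⟩ :=
    (Finite.injective_iff_surjective_of_equiv e.monoidHomCongrLeftEquiv).mp hinj φ
  rintro a (ha : ρ a = 1)
  exact (congrArg ψ ha).trans (map_one ψ)

end

namespace GWelded

variable {p : ℕ}

def mk (p : ℕ) : FreeGroup (Fin 4) →* GWelded p := QuotientGroup.mk' _

lemma mk_surjective : Function.Surjective (mk p) := QuotientGroup.mk'_surjective _

lemma mk_pow_eq_one (w : FreeGroup (Fin 4)) : mk p w ^ p = 1 := by
  rw [← map_pow]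
  exact (QuotientGroup.eq_one_iff _).mpr <|
    Subgroup.subset_normalClosure (Set.mem_union_right _ ⟨w, rfl⟩)

lemma mk_rWelded : mk p rWelded = 1 :=
  (QuotientGroup.eq_one_iff _).mpr <| Subgroup.subset_normalClosure (Set.mem_union_left _ rfl)

end GWelded

theorem WbarGamma_le_ker {m n q : ℕ} {H : Type*} [Group H] (f : FreeGroup (Fin m) →* H)
    (hexp : ∀ w, f w ^ n = 1) (hnil : (⊤ : Subgroup H).lowerCentralSeries (q - 1) = ⊥) :
    WbarGamma m n q ≤ f.ker := by
  refine sup_le (Subgroup.normalClosure_le_normal ?_)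
    (lowerCentralSeries_le_ker_of_eq_bot f hnil)
  rintro _ ⟨w, rfl⟩
  rw [SetLike.mem_coe, MonoidHom.mem_ker, map_pow, hexp]

/-- For every odd prime `p` and every integer `q ≥ p+1`, the quotient
`G/γ_q G` is not isomorphic to `F^q(4,p)`, where `G = ⟨x_1, …, x_4 | r_b, W_p⟩`. -/
theorem GWelded_quot_not_iso (p : ℕ) (hp : p.Prime) (hodd : Odd p)
    (q : ℕ) (hq : p + 1 ≤ q) :
    ¬ Nonempty ((GWelded p ⧸ (⊤ : Subgroup (GWelded p)).lowerCentralSeries (q - 1)) ≃*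
        BurnsideQuot 4 p q) := by
  rintro ⟨e⟩
  have hp2 : 2 < p := hp.two_le.lt_of_ne' (by rintro rfl; exact (by decide : ¬ Odd 2) hodd)
  have : NeZero p := ⟨hp.ne_zero⟩
  set γ := (⊤ : Subgroup (GWelded p)).lowerCentralSeries (q - 1)
  let π : FreeGroup (Fin 4) →* GWelded p ⧸ γ := (QuotientGroup.mk' γ).comp (GWelded.mk p)
  have hπ : WbarGamma 4 p q ≤ π.ker :=
    WbarGamma_le_ker π
      (fun w => by rw [MonoidHom.comp_apply, ← map_pow, GWelded.mk_pow_eq_one, map_one])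
      (lowerCentralSeries_quotient_lowerCentralSeries_eq_bot _)
  have hf : WbarGamma 4 p q ≤ (ClassThree.rWeldedWitness p).ker :=
    WbarGamma_le_ker _ (fun _ => ClassThree.pow_eq_one hodd _) <|
      eq_bot_mono (Subgroup.lowerCentralSeries_antitone _ (by omega))
        ClassThree.lowerCentralSeries_three_eq_bot
  have hρ := QuotientGroup.lift_surjective_of_surjective _ π
    ((QuotientGroup.mk'_surjective _).comp GWelded.mk_surjective) hπ
  refine ClassThree.rWeldedWitness_rWelded_ne_one hp2
    (MonoidHom.ker_le_ker_of_surjective_of_mulEquiv hρ e (QuotientGroup.lift _ _ hf)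
      (x := QuotientGroup.mk rWelded) ?_)
  show QuotientGroup.mk' γ (GWelded.mk p rWelded) = 1
  rw [GWelded.mk_rWelded, map_one]
end

section
/- The element r_b ∈ F_4 does not belong to the subgroup W̄_4 · γ_5 F_4; indeed, in the truncated algebra A_4 over ℤ/2ℤ on X_1, …, X_4, the degree-3 component of E^2(r_b) has coefficient 1 on the monomial X_4X_2X_3. -/
/-- The monomial `X_{w₁} ⋯ X_{w_l}` in the free associative `ZMod p`-algebra `T` on
noncommuting indeterminates `X_1, …, X_m`. -/
def magnusMonomial (p m : ℕ) (w : List (Fin m)) : FreeAlgebra (ZMod p) (Fin m) :=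
  (w.map (FreeAlgebra.ι (ZMod p))).prod

/-- The relation generating (as a ring congruence) the two-sided ideal `I^k`, where
`I ⊆ T` is the two-sided ideal generated by `X_1, …, X_m`: every monomial of degree `k`
is set to `0`. -/
def truncRel (p m k : ℕ) :
    FreeAlgebra (ZMod p) (Fin m) → FreeAlgebra (ZMod p) (Fin m) → Prop :=
  fun a b => ∃ w : List (Fin m), w.length = k ∧ a = magnusMonomial p m w ∧ b = 0

/-- The truncated algebra `A_k = T/I^k`. -/
abbrev TruncAlgebra (p m k : ℕ) := RingQuot (truncRel p m k)

/-- The quotient map `T → A_k`. -/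
def truncMk (p m k : ℕ) :
    FreeAlgebra (ZMod p) (Fin m) →+* TruncAlgebra p m k :=
  RingQuot.mkRingHom _

lemma isUnit_one_add_X (p m k : ℕ) (i : Fin m) :
    IsUnit (1 + truncMk p m k (FreeAlgebra.ι (ZMod p) i)) := by
  refine IsNilpotent.isUnit_one_add ⟨k, ?_⟩
  rw [← map_pow]
  have h1 : (FreeAlgebra.ι (ZMod p) i) ^ k = magnusMonomial p m (List.replicate k i) := by
    simp [magnusMonomial, List.map_replicate, List.prod_replicate]
  have h2 : truncMk p m k (magnusMonomial p m (List.replicate k i)) = truncMk p m k 0 :=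
    RingQuot.mkRingHom_rel ⟨List.replicate k i, List.length_replicate, rfl, rfl⟩
  rw [h1, h2, map_zero]

/-- The Magnus `ZMod p`-expansion truncated at degree `k`: the unique group homomorphism
`E^p : F_m → A_kˣ` with `E^p(x_i) = 1 + X_i`. -/
noncomputable def magnus (p m k : ℕ) :
    FreeGroup (Fin m) →* (TruncAlgebra p m k)ˣ :=
  FreeGroup.lift fun i => (isUnit_one_add_X p m k i).unit

/-- The coefficient of the monomial `X_{w₁} ⋯ X_{w_l}` in an element of the free
algebra `T`, via the canonical basis of `T` given by words in `X_1, …, X_m`. -/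
noncomputable def magnusCoeff (p m : ℕ) (w : List (Fin m))
    (t : FreeAlgebra (ZMod p) (Fin m)) : ZMod p :=
  (FreeAlgebra.equivMonoidAlgebraFreeMonoid (R := ZMod p) (X := Fin m) t).coeff
    (FreeMonoid.ofList w)

/-!
Send `x_a` to `1 + M_a`, where `M_a` is the transition matrix of the letter `X_a` along the
path `0 → 1 → 2 → 3` spelling the word `X_4X_2X_3`. Products of four such matrices vanish, so
this representation factors through the Magnus expansion into `A_4`, and the `(0, 3)` entry of
the image of `t ∈ T` is the coefficient of `X_4X_2X_3` in `t`. The image lies in the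
unitriangular `4 × 4` matrices over `𝔽_2`, a group of exponent `4` (`(1 + N)^4 = 1 + N^4` in
characteristic `2`) in which commutators move strictly further from the diagonal, so it kills
`W̄_4 · γ_5 F_4`. Multiplying out the fourteen matrices gives `1` as the `(0, 3)` entry for
`r_b`.
-/

open scoped commutatorElement

namespace Matrix

variable (R : Type*) [Ring R] (n : ℕ)

def upperBand (d : ℕ) : AddSubgroup (Matrix (Fin n) (Fin n) R) where
  carrier := {N | ∀ i j : Fin n, (j : ℕ) < i + d → N i j = 0}
  add_mem' hN hM i j h := by simp [hN i j h, hM i j h]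
  zero_mem' _ _ _ := rfl
  neg_mem' hN i j h := by simp [hN i j h]

variable {R n}

theorem upperBand_antitone : Antitone (upperBand R n) :=
  fun _ _ hde _ hN i j h => hN i j (by omega)

theorem mul_mem_upperBand {d e : ℕ} {N M : Matrix (Fin n) (Fin n) R}
    (hN : N ∈ upperBand R n d) (hM : M ∈ upperBand R n e) : N * M ∈ upperBand R n (d + e) := by
  intro i j h
  rw [mul_apply]
  refine Finset.sum_eq_zero fun k _ => ?_
  by_cases hk : (k : ℕ) < i + d
  · rw [hN i k hk, zero_mul]
  · rw [hM k j (by omega), mul_zero]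

theorem pow_mem_upperBand {N : Matrix (Fin n) (Fin n) R} (hN : N ∈ upperBand R n 1) (k : ℕ) :
    N ^ k ∈ upperBand R n k := by
  induction k with
  | zero =>
    intro i j h
    rw [pow_zero, one_apply_ne (by rintro rfl; omega)]
  | succ k ih => rw [pow_succ]; exact mul_mem_upperBand ih hN

theorem upperBand_eq_bot {d : ℕ} (h : n ≤ d) : upperBand R n d = ⊥ := by
  refine (AddSubgroup.eq_bot_iff_forall _).2 fun N hN => ?_
  ext i j
  exact hN i j (by omega)

theorem mul_mem_upperBand_of_sub_one_mem {d e : ℕ} {z x : Matrix (Fin n) (Fin n) R}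
    (hz : z ∈ upperBand R n d) (hx : x - 1 ∈ upperBand R n e) : z * x ∈ upperBand R n d := by
  have hzx : z * x = z + z * (x - 1) := by noncomm_ring
  rw [hzx]
  exact add_mem hz (upperBand_antitone (Nat.le_add_right d e) (mul_mem_upperBand hz hx))

theorem mul_sub_one_mem_upperBand {d : ℕ} {x y : Matrix (Fin n) (Fin n) R}
    (hx : x - 1 ∈ upperBand R n d) (hy : y - 1 ∈ upperBand R n d) :
    x * y - 1 ∈ upperBand R n d := by
  have hxy : x * y - 1 = (x - 1) + (y - 1) + (x - 1) * (y - 1) := by noncomm_ring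
  rw [hxy]
  exact add_mem (add_mem hx hy)
    (upperBand_antitone (Nat.le_add_right d d) (mul_mem_upperBand hx hy))

variable (R n) in
def unitriangularLevel (d : ℕ) : Subgroup (Matrix (Fin n) (Fin n) R)ˣ where
  carrier := {u | (u : Matrix (Fin n) (Fin n) R) - 1 ∈ upperBand R n d ∧
    (↑u⁻¹ : Matrix (Fin n) (Fin n) R) - 1 ∈ upperBand R n d}
  one_mem' := by simp
  mul_mem' hu hv := by
    rw [Set.mem_ofPred_eq, _root_.mul_inv_rev, Units.val_mul, Units.val_mul]
    exact ⟨mul_sub_one_mem_upperBand hu.1 hv.1, mul_sub_one_mem_upperBand hv.2 hu.2⟩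
  inv_mem' hu := ⟨hu.2, by simpa only [inv_inv] using hu.1⟩

theorem mem_unitriangularLevel_one_iff {u : (Matrix (Fin n) (Fin n) R)ˣ} :
    u ∈ unitriangularLevel R n 1 ↔ (u : Matrix (Fin n) (Fin n) R) - 1 ∈ upperBand R n 1 := by
  refine ⟨And.left, fun hN => ⟨hN, ?_⟩⟩
  set N := (u : Matrix (Fin n) (Fin n) R) - 1
  -- `N` is nilpotent, so `u = 1 + N` is inverted by a finite geometric series.
  have hinv : (↑u⁻¹ : Matrix (Fin n) (Fin n) R) = ∑ i ∈ Finset.range n, (-N) ^ i := by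
    refine Units.inv_eq_of_mul_eq_one_right ?_
    have hNn : (-N) ^ n = 0 := by
      rw [← AddSubgroup.mem_bot, ← upperBand_eq_bot le_rfl]
      exact pow_mem_upperBand (neg_mem hN) n
    rw [show (u : Matrix (Fin n) (Fin n) R) = 1 - -N by simp [N], mul_neg_geom_sum, hNn,
      sub_zero]
  have hinv_mem : (↑u⁻¹ : Matrix (Fin n) (Fin n) R) ∈ upperBand R n 0 := by
    rw [hinv]
    exact sum_mem fun i _ =>
      upperBand_antitone (Nat.zero_le i) (pow_mem_upperBand (neg_mem hN) i)
  have hsub : (↑u⁻¹ : Matrix (Fin n) (Fin n) R) - 1 =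
      -(N * (↑u⁻¹ : Matrix (Fin n) (Fin n) R)) := by
    rw [sub_mul, Units.mul_inv, one_mul, neg_sub]
  rw [hsub]
  exact neg_mem (mul_mem_upperBand hN hinv_mem)

theorem val_commutatorElement_sub_one_mem {d e : ℕ} {u v : (Matrix (Fin n) (Fin n) R)ˣ}
    (hu : u ∈ unitriangularLevel R n d) (hv : v ∈ unitriangularLevel R n e) :
    (↑⁅u, v⁆ : Matrix (Fin n) (Fin n) R) - 1 ∈ upperBand R n (d + e) := by
  have hcomm : (↑⁅u, v⁆ : Matrix (Fin n) (Fin n) R) - 1 =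
      ((↑u - 1) * (↑v - 1) - (↑v - 1) * (↑u - 1)) * (↑u⁻¹ : Matrix (Fin n) (Fin n) R) *
        (↑v⁻¹ : Matrix (Fin n) (Fin n) R) := by
    calc (↑⁅u, v⁆ : Matrix (Fin n) (Fin n) R) - 1
        = (↑u * ↑v - ↑v * ↑u) * (↑u⁻¹ : Matrix (Fin n) (Fin n) R) *
            (↑v⁻¹ : Matrix (Fin n) (Fin n) R) := by
          rw [sub_mul, sub_mul, mul_assoc (v : Matrix (Fin n) (Fin n) R), u.mul_inv, mul_one,
            v.mul_inv, commutatorElement_def]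
          simp only [Units.val_mul]
      _ = _ := by noncomm_ring
  rw [hcomm]
  refine mul_mem_upperBand_of_sub_one_mem (mul_mem_upperBand_of_sub_one_mem
    (sub_mem (mul_mem_upperBand hu.1 hv.1) ?_) hu.2) hv.2
  rw [add_comm]
  exact mul_mem_upperBand hv.1 hu.1

theorem commutatorElement_mem_unitriangularLevel {d e : ℕ} {u v : (Matrix (Fin n) (Fin n) R)ˣ}
    (hu : u ∈ unitriangularLevel R n d) (hv : v ∈ unitriangularLevel R n e) :
    ⁅u, v⁆ ∈ unitriangularLevel R n (d + e) :=
  ⟨val_commutatorElement_sub_one_mem hu hv, by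
    rw [commutatorElement_inv, add_comm]; exact val_commutatorElement_sub_one_mem hv hu⟩

theorem map_mem_unitriangularLevel_of_mem_lowerCentralSeries {G : Type*} [Group G]
    (ρ : G →* (Matrix (Fin n) (Fin n) R)ˣ) (hρ : ∀ g, ρ g ∈ unitriangularLevel R n 1) {k : ℕ}
    {g : G} (hg : g ∈ (⊤ : Subgroup G).lowerCentralSeries k) :
    ρ g ∈ unitriangularLevel R n (k + 1) := by
  refine Subgroup.descending_central_series_ge_lower
    (fun k => (unitriangularLevel R n (k + 1)).comap ρ) ⟨?_, fun x k hx g => ?_⟩ k hg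
  · exact eq_top_iff.2 fun g _ => hρ g
  · rw [Subgroup.mem_comap, map_commutatorElement]
    exact commutatorElement_mem_unitriangularLevel hx (hρ g)

theorem eq_one_of_mem_unitriangularLevel {d : ℕ} (hd : n ≤ d) {u : (Matrix (Fin n) (Fin n) R)ˣ}
    (hu : u ∈ unitriangularLevel R n d) : u = 1 := by
  have h := hu.1
  rw [upperBand_eq_bot hd, AddSubgroup.mem_bot, sub_eq_zero] at h
  exact Units.ext h

theorem pow_eq_one_of_mem_unitriangularLevel_one {p k : ℕ} [Fact p.Prime] [CharP R p]
    (hn : n ≤ p ^ k) {u : (Matrix (Fin n) (Fin n) R)ˣ} (hu : u ∈ unitriangularLevel R n 1) :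
    u ^ p ^ k = 1 := by
  rcases n with _ | n
  · exact Subsingleton.elim _ _
  refine Units.ext ?_
  rw [Units.val_pow_eq_pow_val, Units.val_one,
    ← sub_add_cancel (u : Matrix (Fin (n + 1)) (Fin (n + 1)) R) 1,
    add_pow_char_pow_of_commute p k (Commute.one_right _), one_pow,
    (upperBand_eq_bot hn).le (pow_mem_upperBand hu.1 _), zero_add]

section pathMatrix

variable (R) {α : Type*} [DecidableEq α] (w : List α)

/-- The transition matrix of the letter `a` in the automaton `0 → 1 → ⋯ → |w|` spelling `w`. -/
def pathMatrix (a : α) : Matrix (Fin (w.length + 1)) (Fin (w.length + 1)) R :=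
  of fun i j => if (j : ℕ) = i + 1 ∧ w[(i : ℕ)]? = some a then 1 else 0

variable {R w}

theorem pathMatrix_mem_upperBand (a : α) : pathMatrix R w a ∈ upperBand R _ 1 := by
  intro i j h
  simp only [pathMatrix, of_apply, ite_eq_right_iff, and_imp]
  intro hj
  omega

theorem prod_map_pathMatrix_apply (u : List α) (i j : Fin (w.length + 1)) :
    (u.map (pathMatrix R w)).prod i j =
      if (j : ℕ) = i + u.length ∧ u <+: w.drop i then 1 else 0 := by
  induction u generalizing i with
  | nil => simp [one_apply, Fin.ext_iff, eq_comm]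
  | cons a u ih =>
    rw [List.map_cons, List.prod_cons, mul_apply]
    by_cases ha : w[(i : ℕ)]? = some a
    · obtain ⟨hi, hwi⟩ := List.getElem?_eq_some_iff.1 ha
      rw [Finset.sum_eq_single ⟨i + 1, by omega⟩ (fun k _ hk => ?_) (by simp), ih,
        List.drop_eq_getElem_cons hi, hwi]
      · simp [pathMatrix, ha, Nat.add_assoc, Nat.add_comm 1]
      · simp only [ne_eq, Fin.ext_iff] at hk
        simp [pathMatrix, hk]
    · have hnot : ¬ a :: u <+: w.drop i := by
        rintro ⟨t, ht⟩
        rw [← List.head?_drop, ← ht] at ha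
        exact ha rfl
      rw [if_neg (fun h => hnot h.2)]
      exact Finset.sum_eq_zero fun k _ => by simp [pathMatrix, ha]

theorem prod_map_pathMatrix_apply_zero_last (u : List α) :
    (u.map (pathMatrix R w)).prod 0 (Fin.last _) = if u = w then 1 else 0 := by
  rw [prod_map_pathMatrix_apply]
  refine if_congr ⟨fun ⟨hlen, hpre⟩ => hpre.eq_of_length ?_, ?_⟩ rfl rfl
  · simp_all
  · rintro rfl
    simp

theorem prod_map_pathMatrix_eq_zero {u : List α} (h : w.length < u.length) :
    (u.map (pathMatrix R w)).prod = 0 := by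
  ext i j
  rw [prod_map_pathMatrix_apply, if_neg (by omega), zero_apply]

end pathMatrix

end Matrix

open Matrix

section pathRep

variable {p m k : ℕ}

theorem lift_pathMatrix_magnusMonomial (w u : List (Fin m)) :
    FreeAlgebra.lift (ZMod p) (pathMatrix (ZMod p) w) (magnusMonomial p m u) =
      (u.map (pathMatrix (ZMod p) w)).prod := by
  simp [magnusMonomial, map_list_prod, List.map_map, Function.comp_def]

theorem basisFreeMonoid_eq_magnusMonomial (u : FreeMonoid (Fin m)) :
    FreeAlgebra.basisFreeMonoid (ZMod p) (Fin m) u = magnusMonomial p m u.toList := by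
  simp [FreeAlgebra.basisFreeMonoid, FreeAlgebra.equivMonoidAlgebraFreeMonoid, magnusMonomial,
    FreeMonoid.lift_apply]

theorem lift_pathMatrix_apply_zero_last (w : List (Fin m)) (t : FreeAlgebra (ZMod p) (Fin m)) :
    FreeAlgebra.lift (ZMod p) (pathMatrix (ZMod p) w) t 0 (Fin.last _) = magnusCoeff p m w t := by
  classical
  let b := FreeAlgebra.basisFreeMonoid (ZMod p) (Fin m)
  have h : entryLinearMap (ZMod p) (ZMod p) 0 (Fin.last _) ∘ₗ
      (FreeAlgebra.lift (ZMod p) (pathMatrix (ZMod p) w)).toLinearMap = b.coord (.ofList w) := by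
    refine b.ext fun u => ?_
    rw [LinearMap.comp_apply, b.coord_apply, b.repr_self, Finsupp.single_apply]
    simp only [b, basisFreeMonoid_eq_magnusMonomial, AlgHom.toLinearMap_apply,
      lift_pathMatrix_magnusMonomial, entryLinearMap_apply, prod_map_pathMatrix_apply_zero_last]
    exact if_congr FreeMonoid.toList.eq_symm_apply.symm rfl rfl
  exact LinearMap.congr_fun h t

variable (p) (w : List (Fin m)) (hw : w.length < k)

noncomputable def truncPathRep :
    TruncAlgebra p m k →+* Matrix (Fin (w.length + 1)) (Fin (w.length + 1)) (ZMod p) :=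
  RingQuot.lift ⟨FreeAlgebra.lift (ZMod p) (pathMatrix (ZMod p) w), by
    rintro _ _ ⟨u, hu, rfl, rfl⟩
    simp [lift_pathMatrix_magnusMonomial, prod_map_pathMatrix_eq_zero (hw.trans_eq hu.symm)]⟩

theorem truncPathRep_truncMk (t : FreeAlgebra (ZMod p) (Fin m)) :
    truncPathRep p w hw (truncMk p m k t) = FreeAlgebra.lift (ZMod p) (pathMatrix (ZMod p) w) t :=
  RingQuot.lift_mkRingHom_apply _ _ t

noncomputable def pathRep :
    FreeGroup (Fin m) →* (Matrix (Fin (w.length + 1)) (Fin (w.length + 1)) (ZMod p))ˣ :=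
  (Units.map (truncPathRep p w hw).toMonoidHom).comp (magnus p m k)

theorem coe_pathRep (g : FreeGroup (Fin m)) :
    (pathRep p w hw g : Matrix (Fin (w.length + 1)) (Fin (w.length + 1)) (ZMod p)) =
      truncPathRep p w hw (magnus p m k g) := rfl

theorem coe_pathRep_of (a : Fin m) :
    (pathRep p w hw (.of a) : Matrix (Fin (w.length + 1)) (Fin (w.length + 1)) (ZMod p)) =
      1 + pathMatrix (ZMod p) w a := by
  rw [coe_pathRep, magnus, FreeGroup.lift_apply_of, IsUnit.unit_spec, map_add, map_one,
    truncPathRep_truncMk, FreeAlgebra.lift_ι_apply]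

theorem coe_pathRep_of_inv {a : Fin m}
    (ha : pathMatrix (ZMod p) w a * pathMatrix (ZMod p) w a = 0) :
    (pathRep p w hw (.of a)⁻¹ : Matrix (Fin (w.length + 1)) (Fin (w.length + 1)) (ZMod p)) =
      1 - pathMatrix (ZMod p) w a := by
  rw [map_inv]
  refine Units.inv_eq_of_mul_eq_one_right ?_
  have hsq : (1 + pathMatrix (ZMod p) w a) * (1 - pathMatrix (ZMod p) w a) =
      1 - pathMatrix (ZMod p) w a * pathMatrix (ZMod p) w a := by noncomm_ring
  rw [coe_pathRep_of, hsq, ha, sub_zero]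

theorem pathRep_mem_unitriangularLevel_one (g : FreeGroup (Fin m)) :
    pathRep p w hw g ∈ unitriangularLevel (ZMod p) _ 1 := by
  suffices h : (⊤ : Subgroup (FreeGroup (Fin m))) ≤
      (unitriangularLevel (ZMod p) _ 1).comap (pathRep p w hw) from h (Subgroup.mem_top g)
  rw [← FreeGroup.closure_range_of, Subgroup.closure_le]
  rintro _ ⟨a, rfl⟩
  rw [SetLike.mem_coe, Subgroup.mem_comap, mem_unitriangularLevel_one_iff, coe_pathRep_of,
    add_sub_cancel_left]
  exact pathMatrix_mem_upperBand a

theorem WbarGamma_le_ker_pathRep [Fact p.Prime] {j q : ℕ} (hp : w.length < p ^ j)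
    (hq : w.length < q) : WbarGamma m (p ^ j) q ≤ (pathRep p w hw).ker := by
  refine sup_le (Subgroup.normalClosure_le_normal ?_) fun g hg => ?_
  · rintro _ ⟨g, rfl⟩
    rw [SetLike.mem_coe, MonoidHom.mem_ker, map_pow]
    exact pow_eq_one_of_mem_unitriangularLevel_one hp (pathRep_mem_unitriangularLevel_one p w hw g)
  · exact eq_one_of_mem_unitriangularLevel (by omega)
      (map_mem_unitriangularLevel_of_mem_lowerCentralSeries _
        (pathRep_mem_unitriangularLevel_one p w hw) hg)

end pathRep

theorem pathRep_rWelded_apply_zero_three :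
    (pathRep 2 [3, 1, 2] (k := 4) (by decide) rWelded : Matrix (Fin 4) (Fin 4) (ZMod 2)) 0 3 =
      1 := by
  simp (disch := decide) only [rWelded, QWelded, xF4, map_mul, Units.val_mul, coe_pathRep_of,
    coe_pathRep_of_inv]
  decide

/-- The element `r_b ∈ F_4` does not belong to `W̄_4 · γ_5 F_4`;
indeed, in `A_4` over `ℤ/2ℤ` on `X_1, …, X_4`, the degree-3 component of `E^2(r_b)` has
coefficient `1` on `X_4X_2X_3`. -/
theorem rWelded_not_mem_WbarGamma_four :
    rWelded ∉ WbarGamma 4 4 5 ∧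
    ∀ t : FreeAlgebra (ZMod 2) (Fin 4),
      truncMk 2 4 4 t = ↑(magnus 2 4 4 rWelded) →
        magnusCoeff 2 4 [3, 1, 2] t = 1 := by
  refine ⟨fun hmem => ?_, fun t ht => ?_⟩
  · have hker := WbarGamma_le_ker_pathRep (j := 2) 2 [3, 1, 2] (k := 4) (by decide) (by decide)
      (by decide) hmem
    have h := pathRep_rWelded_apply_zero_three
    rw [MonoidHom.mem_ker.1 hker] at h
    exact absurd h (by decide)
  · rw [← lift_pathMatrix_apply_zero_last, ← truncPathRep_truncMk 2 _ (k := 4) (by decide), ht,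
      ← coe_pathRep]
    exact pathRep_rWelded_apply_zero_three
end
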